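/- Under the conformal change ā_{ij} = e^{2σ}a_{ij}, b̄_i = e^{σ}b_i, the transvected quantities satisfy, for all x ∈ M and all y ∈ ℝⁿ: γ̄^i_{00} = γ^i_{00} + 2σ₀ y^i − α² σ^i, r̄_{00} = e^{σ}(r_{00} + ρα² − σ₀β), s̄^i_0 = e^{−σ}[s^i_0 + ½(σ₀ b^i − β σ^i)], and s̄_0 = s_0 + ½(σ₀ b² − ρβ). -/

import Mathlib

noncomputable section

namespace CD

/-- Partial derivative of `f` in the `j`-th coordinate direction at `x`. -/
def pd {n : ℕ} (f : (Fin n → ℝ) → ℝ) (j : Fin n) (x : Fin n → ℝ) : ℝ :=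
  fderiv ℝ f x (Pi.single j 1)

/-- Christoffel symbols `γ^i_{jk} = ½ a^{ir}(∂_j a_{rk} + ∂_k a_{rj} − ∂_r a_{jk})`
of the Riemannian metric `a`, where `ainv` denotes the inverse matrix field `a^{ij}`. -/
def chr {n : ℕ} (a ainv : (Fin n → ℝ) → Matrix (Fin n) (Fin n) ℝ)
    (x : Fin n → ℝ) (i j k : Fin n) : ℝ :=
  (1 / 2) * ∑ r, ainv x i r *
    (pd (fun z => a z r k) j x + pd (fun z => a z r j) k x - pd (fun z => a z j k) r x)

/-- Covariant derivative `b_{i:j} = ∂_j b_i − b_r γ^r_{ij}`. -/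
def covd {n : ℕ} (a ainv : (Fin n → ℝ) → Matrix (Fin n) (Fin n) ℝ)
    (b : (Fin n → ℝ) → Fin n → ℝ) (x : Fin n → ℝ) (i j : Fin n) : ℝ :=
  pd (fun z => b z i) j x - ∑ r, b x r * chr a ainv x r i j

/-- `r_{ij}` with `2r_{ij} = b_{i:j} + b_{j:i}`. -/
def rlow {n : ℕ} (a ainv : (Fin n → ℝ) → Matrix (Fin n) (Fin n) ℝ)
    (b : (Fin n → ℝ) → Fin n → ℝ) (x : Fin n → ℝ) (i j : Fin n) : ℝ :=
  (covd a ainv b x i j + covd a ainv b x j i) / 2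

/-- `s_{ij}` with `2s_{ij} = b_{i:j} − b_{j:i}`. -/
def slow {n : ℕ} (a ainv : (Fin n → ℝ) → Matrix (Fin n) (Fin n) ℝ)
    (b : (Fin n → ℝ) → Fin n → ℝ) (x : Fin n → ℝ) (i j : Fin n) : ℝ :=
  (covd a ainv b x i j - covd a ainv b x j i) / 2

/-- `b^i = a^{ir} b_r`. -/
def bup {n : ℕ} (ainv : (Fin n → ℝ) → Matrix (Fin n) (Fin n) ℝ)
    (b : (Fin n → ℝ) → Fin n → ℝ) (x : Fin n → ℝ) (i : Fin n) : ℝ :=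
  ∑ r, ainv x i r * b x r

/-- `b² = a^{rs} b_r b_s`. -/
def bsq {n : ℕ} (ainv : (Fin n → ℝ) → Matrix (Fin n) (Fin n) ℝ)
    (b : (Fin n → ℝ) → Fin n → ℝ) (x : Fin n → ℝ) : ℝ :=
  ∑ r, ∑ s, ainv x r s * b x r * b x s

/-- `s^i_j = a^{ir} s_{rj}`. -/
def sup {n : ℕ} (a ainv : (Fin n → ℝ) → Matrix (Fin n) (Fin n) ℝ)
    (b : (Fin n → ℝ) → Fin n → ℝ) (x : Fin n → ℝ) (i j : Fin n) : ℝ :=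
  ∑ r, ainv x i r * slow a ainv b x r j

/-- `s_j = b_r s^r_j`. -/
def svec {n : ℕ} (a ainv : (Fin n → ℝ) → Matrix (Fin n) (Fin n) ℝ)
    (b : (Fin n → ℝ) → Fin n → ℝ) (x : Fin n → ℝ) (j : Fin n) : ℝ :=
  ∑ r, b x r * sup a ainv b x r j

/-- `r_i = b^r r_{ri}`. -/
def rvec {n : ℕ} (a ainv : (Fin n → ℝ) → Matrix (Fin n) (Fin n) ℝ)
    (b : (Fin n → ℝ) → Fin n → ℝ) (x : Fin n → ℝ) (i : Fin n) : ℝ :=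
  ∑ r, bup ainv b x r * rlow a ainv b x r i

/-- `α(x,y) = √(a_{ij}(x) y^i y^j)`. -/
def alpha {n : ℕ} (a : (Fin n → ℝ) → Matrix (Fin n) (Fin n) ℝ)
    (x y : Fin n → ℝ) : ℝ :=
  Real.sqrt (∑ i, ∑ j, a x i j * y i * y j)

/-- `β(x,y) = b_i(x) y^i`. -/
def beta {n : ℕ} (b : (Fin n → ℝ) → Fin n → ℝ) (x y : Fin n → ℝ) : ℝ :=
  ∑ i, b x i * y i

/-- `γ^i_{00} = γ^i_{jk} y^j y^k`. -/
def gam00 {n : ℕ} (a ainv : (Fin n → ℝ) → Matrix (Fin n) (Fin n) ℝ)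
    (x y : Fin n → ℝ) (i : Fin n) : ℝ :=
  ∑ j, ∑ k, chr a ainv x i j k * y j * y k

/-- `γ^m_{0m} = γ^m_{jm} y^j`. -/
def gamTr {n : ℕ} (a ainv : (Fin n → ℝ) → Matrix (Fin n) (Fin n) ℝ)
    (x y : Fin n → ℝ) : ℝ :=
  ∑ m, ∑ j, chr a ainv x m j m * y j

/-- `r_{00} = r_{ij} y^i y^j`. -/
def r00 {n : ℕ} (a ainv : (Fin n → ℝ) → Matrix (Fin n) (Fin n) ℝ)
    (b : (Fin n → ℝ) → Fin n → ℝ) (x y : Fin n → ℝ) : ℝ :=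
  ∑ i, ∑ j, rlow a ainv b x i j * y i * y j

/-- `s^i_0 = s^i_j y^j`. -/
def sup0 {n : ℕ} (a ainv : (Fin n → ℝ) → Matrix (Fin n) (Fin n) ℝ)
    (b : (Fin n → ℝ) → Fin n → ℝ) (x y : Fin n → ℝ) (i : Fin n) : ℝ :=
  ∑ j, sup a ainv b x i j * y j

/-- `s_0 = s_j y^j`. -/
def s0 {n : ℕ} (a ainv : (Fin n → ℝ) → Matrix (Fin n) (Fin n) ℝ)
    (b : (Fin n → ℝ) → Fin n → ℝ) (x y : Fin n → ℝ) : ℝ :=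
  ∑ j, svec a ainv b x j * y j

/-- `r_0 = r_i y^i`. -/
def r0 {n : ℕ} (a ainv : (Fin n → ℝ) → Matrix (Fin n) (Fin n) ℝ)
    (b : (Fin n → ℝ) → Fin n → ℝ) (x y : Fin n → ℝ) : ℝ :=
  ∑ i, rvec a ainv b x i * y i

/-- `σ₀ = σ_i y^i` where `σ_i = ∂_i σ`. -/
def sig0 {n : ℕ} (σ : (Fin n → ℝ) → ℝ) (x y : Fin n → ℝ) : ℝ :=
  ∑ j, pd σ j x * y j

/-- `σ^i = a^{ir} σ_r`. -/
def sigup {n : ℕ} (ainv : (Fin n → ℝ) → Matrix (Fin n) (Fin n) ℝ)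
    (σ : (Fin n → ℝ) → ℝ) (x : Fin n → ℝ) (i : Fin n) : ℝ :=
  ∑ r, ainv x i r * pd σ r x

/-- `ρ = σ_r b^r`. -/
def rho {n : ℕ} (ainv : (Fin n → ℝ) → Matrix (Fin n) (Fin n) ℝ)
    (b : (Fin n → ℝ) → Fin n → ℝ) (σ : (Fin n → ℝ) → ℝ) (x : Fin n → ℝ) : ℝ :=
  ∑ r, pd σ r x * bup ainv b x r

/-- `L_α`. -/
def La (L : ℝ → ℝ → ℝ) (s t : ℝ) : ℝ := deriv (fun u => L u t) s
/-- `L_β`. -/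
def Lb (L : ℝ → ℝ → ℝ) (s t : ℝ) : ℝ := deriv (fun u => L s u) t
/-- `L_{αα}`. -/
def Laa (L : ℝ → ℝ → ℝ) (s t : ℝ) : ℝ := deriv (fun u => La L u t) s
/-- `L_{ααα}`. -/
def Laaa (L : ℝ → ℝ → ℝ) (s t : ℝ) : ℝ := deriv (fun u => Laa L u t) s

/-- `γ² = b²α² − β²`, as a function of `b², α, β`. -/
def gam2 (b2 s t : ℝ) : ℝ := b2 * s ^ 2 - t ^ 2

/-- `Ω = β²L_α + αγ²L_{αα}`. -/
def Om (L : ℝ → ℝ → ℝ) (b2 s t : ℝ) : ℝ :=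
  t ^ 2 * La L s t + s * gam2 b2 s t * Laa L s t

/-- `A = αL_αL_{ααα} + 3L_αL_{αα} − 3α(L_{αα})²`. -/
def Afun (L : ℝ → ℝ → ℝ) (s t : ℝ) : ℝ :=
  s * La L s t * Laaa L s t + 3 * La L s t * Laa L s t - 3 * s * (Laa L s t) ^ 2

/-- `B = αβγ²L_αL_βL_{ααα} + β{(3γ² − β²)L_α − 4αγ²L_{αα}}L_βL_{αα} + ΩLL_{αα}`. -/
def Bcal (L : ℝ → ℝ → ℝ) (b2 s t : ℝ) : ℝ :=
  s * t * gam2 b2 s t * La L s t * Lb L s t * Laaa L s t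
    + t * ((3 * gam2 b2 s t - t ^ 2) * La L s t - 4 * s * gam2 b2 s t * Laa L s t)
        * Lb L s t * Laa L s t
    + Om L b2 s t * L s t * Laa L s t

/-- `C* = αβ(r₀₀L_α − 2αs₀L_β)/(2Ω)`. -/
def Cstar {n : ℕ} (L : ℝ → ℝ → ℝ) (a ainv : (Fin n → ℝ) → Matrix (Fin n) (Fin n) ℝ)
    (b : (Fin n → ℝ) → Fin n → ℝ) (x y : Fin n → ℝ) : ℝ :=
  let s := alpha a x y
  let t := beta b x y
  s * t * (r00 a ainv b x y * La L s t - 2 * s * s0 a ainv b x y * Lb L s t)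
    / (2 * Om L (bsq ainv b x) s t)

/-- `D* = αβ[(ρα² − σ₀β)L_α − α(b²σ₀ − ρβ)L_β]/(2Ω)`. -/
def Dstar {n : ℕ} (L : ℝ → ℝ → ℝ) (a ainv : (Fin n → ℝ) → Matrix (Fin n) (Fin n) ℝ)
    (b : (Fin n → ℝ) → Fin n → ℝ) (σ : (Fin n → ℝ) → ℝ) (x y : Fin n → ℝ) : ℝ :=
  let s := alpha a x y
  let t := beta b x y
  s * t * ((rho ainv b σ x * s ^ 2 - sig0 σ x y * t) * La L s t
      - s * (bsq ainv b x * sig0 σ x y - rho ainv b σ x * t) * Lb L s t)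
    / (2 * Om L (bsq ainv b x) s t)

/-- The spray difference vector
`B^i = (αL_β/L_α)s^i_0 + C*[(βL_β/(αL))y^i − (αL_{αα}/L_α)(y^i/α − αb^i/β)]`. -/
def Bi {n : ℕ} (L : ℝ → ℝ → ℝ) (a ainv : (Fin n → ℝ) → Matrix (Fin n) (Fin n) ℝ)
    (b : (Fin n → ℝ) → Fin n → ℝ) (x y : Fin n → ℝ) (i : Fin n) : ℝ :=
  let s := alpha a x y
  let t := beta b x y
  (s * Lb L s t / La L s t) * sup0 a ainv b x y i
    + Cstar L a ainv b x y *
        ((t * Lb L s t / (s * L s t)) * y i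
          - (s * Laa L s t / La L s t) * (y i / s - s * bup ainv b x i / t))

/-- `B^m_m = ∂B^m/∂y^m`. -/
def Bmm {n : ℕ} (L : ℝ → ℝ → ℝ) (a ainv : (Fin n → ℝ) → Matrix (Fin n) (Fin n) ℝ)
    (b : (Fin n → ℝ) → Fin n → ℝ) (x y : Fin n → ℝ) : ℝ :=
  ∑ m, fderiv ℝ (fun y' => Bi L a ainv b x y' m) y (Pi.single m 1)

/-- `B^{ij} = (αL_β/L_α)(s^i_0y^j − s^j_0y^i) + (α²L_{αα}/(βL_α))C*(b^iy^j − b^jy^i)`. -/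
def BijC {n : ℕ} (L : ℝ → ℝ → ℝ) (a ainv : (Fin n → ℝ) → Matrix (Fin n) (Fin n) ℝ)
    (b : (Fin n → ℝ) → Fin n → ℝ) (x y : Fin n → ℝ) (i j : Fin n) : ℝ :=
  let s := alpha a x y
  let t := beta b x y
  (s * Lb L s t / La L s t) * (sup0 a ainv b x y i * y j - sup0 a ainv b x y j * y i)
    + (s ^ 2 * Laa L s t / (t * La L s t)) * Cstar L a ainv b x y
        * (bup ainv b x i * y j - bup ainv b x j * y i)

/-- The closed formula for `B^{im}_m`. -/
def BimmC {n : ℕ} (L : ℝ → ℝ → ℝ) (a ainv : (Fin n → ℝ) → Matrix (Fin n) (Fin n) ℝ)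
    (b : (Fin n → ℝ) → Fin n → ℝ) (x y : Fin n → ℝ) (i : Fin n) : ℝ :=
  let s := alpha a x y
  let t := beta b x y
  let b2 := bsq ainv b x
  let O := Om L b2 s t
  (n + 1 : ℝ) * s * Lb L s t * sup0 a ainv b x y i / La L s t
    + s * ((n + 1 : ℝ) * s ^ 2 * O * Laa L s t * bup ainv b x i
        + t * gam2 b2 s t * Afun L s t * y i) * r00 a ainv b x y / (2 * O ^ 2)
    - s ^ 2 * ((n + 1 : ℝ) * s ^ 2 * O * Lb L s t * Laa L s t * bup ainv b x i
        + Bcal L b2 s t * y i) * s0 a ainv b x y / (La L s t * O ^ 2)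
    - s ^ 3 * Laa L s t * y i * r0 a ainv b x y / O

/-- The conformal correction `K^{im}_m`, given by
`2K^{im}_m = (n+1)(αL_β/L_α)(σ₀b^i − βσ^i)
  + α{((n+1)α²ΩL_{αα}b^i + βγ²Ay^i)/Ω²}(ρα² − σ₀β)
  − [α²{(n+1)α²ΩL_βL_{αα}b^i + By^i}/(L_αΩ²) − α³L_{αα}y^i/Ω](b²σ₀ − ρβ)`. -/
def Kimm {n : ℕ} (L : ℝ → ℝ → ℝ) (a ainv : (Fin n → ℝ) → Matrix (Fin n) (Fin n) ℝ)
    (b : (Fin n → ℝ) → Fin n → ℝ) (σ : (Fin n → ℝ) → ℝ) (x y : Fin n → ℝ) (i : Fin n) : ℝ :=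
  let s := alpha a x y
  let t := beta b x y
  let b2 := bsq ainv b x
  let O := Om L b2 s t
  let σ0 := sig0 σ x y
  let ρ := rho ainv b σ x
  (1 / 2) *
    ((n + 1 : ℝ) * (s * Lb L s t / La L s t) * (σ0 * bup ainv b x i - t * sigup ainv σ x i)
      + s * (((n + 1 : ℝ) * s ^ 2 * O * Laa L s t * bup ainv b x i
            + t * gam2 b2 s t * Afun L s t * y i) / O ^ 2) * (ρ * s ^ 2 - σ0 * t)
      - (s ^ 2 * ((n + 1 : ℝ) * s ^ 2 * O * Lb L s t * Laa L s t * bup ainv b x i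
            + Bcal L b2 s t * y i) / (La L s t * O ^ 2)
          - s ^ 3 * Laa L s t * y i / O) * (b2 * σ0 - ρ * t))

/-- `E` is hp(d): it agrees with a homogeneous polynomial of degree `d` in `y`. -/
def IsHP {n : ℕ} (d : ℕ) (E : (Fin n → ℝ) → ℝ) : Prop :=
  ∃ p : MvPolynomial (Fin n) ℝ, p.IsHomogeneous d ∧ ∀ y, E y = MvPolynomial.eval y p

/-- The conformally changed metric `ā_{ij} = e^{2σ} a_{ij}`. -/
def abar {n : ℕ} (σ : (Fin n → ℝ) → ℝ) (a : (Fin n → ℝ) → Matrix (Fin n) (Fin n) ℝ) :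
    (Fin n → ℝ) → Matrix (Fin n) (Fin n) ℝ :=
  fun z => Real.exp (2 * σ z) • a z

/-- The conformally changed covector `b̄_i = e^{σ} b_i`. -/
def bbar {n : ℕ} (σ : (Fin n → ℝ) → ℝ) (b : (Fin n → ℝ) → Fin n → ℝ) :
    (Fin n → ℝ) → Fin n → ℝ :=
  fun z i => Real.exp (σ z) * b z i

/-- The special (α,β)-metric `L = α + εβ + kβ²/α`. -/
def Lsp (ε k : ℝ) : ℝ → ℝ → ℝ := fun s t => s + ε * t + k * t ^ 2 / s


lemma pd_mul {n : ℕ} {f g : (Fin n → ℝ) → ℝ} {x : Fin n → ℝ}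
    (hf : DifferentiableAt ℝ f x) (hg : DifferentiableAt ℝ g x) (j : Fin n) :
    pd (fun z => f z * g z) j x = pd f j x * g x + f x * pd g j x := by
  unfold pd
  rw [fderiv_fun_mul hf hg]
  simp only [ContinuousLinearMap.add_apply, ContinuousLinearMap.coe_smul', Pi.smul_apply,
    smul_eq_mul]
  ring

lemma pd_exp_mul {n : ℕ} {σ : (Fin n → ℝ) → ℝ} {x : Fin n → ℝ}
    (hσ : DifferentiableAt ℝ σ x) (c : ℝ) (j : Fin n) :
    pd (fun z => Real.exp (c * σ z)) j x = Real.exp (c * σ x) * (c * pd σ j x) := by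
  unfold pd
  rw [fderiv_exp (hσ.const_mul c), fderiv_const_mul hσ c]
  simp [mul_assoc]

/-- conformal change of the transvected quantities
γ^i_{00}, r_{00}, s^i_0 and s_0. -/
theorem conformal_change_transvected
    {n : ℕ} (hn : 2 ≤ n) (M : Set (Fin n → ℝ)) (hM : IsOpen M)
    (a ainv abarInv : (Fin n → ℝ) → Matrix (Fin n) (Fin n) ℝ)
    (b : (Fin n → ℝ) → Fin n → ℝ) (σ : (Fin n → ℝ) → ℝ)
    (ha : ∀ i j, ContDiffOn ℝ (⊤ : ℕ∞) (fun z => a z i j) M)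
    (hb : ∀ i, ContDiffOn ℝ (⊤ : ℕ∞) (fun z => b z i) M)
    (hσ : ContDiffOn ℝ (⊤ : ℕ∞) σ M)
    (hsym : ∀ x ∈ M, (a x).IsSymm)
    (hpos : ∀ x ∈ M, (a x).PosDef)
    (hInv : ∀ x ∈ M, a x * ainv x = 1)
    (hInvBar : ∀ x ∈ M, abar σ a x * abarInv x = 1)
    (x : Fin n → ℝ) (hx : x ∈ M) :
    ∀ y : Fin n → ℝ,
      (∀ i, gam00 (abar σ a) abarInv x y i
        = gam00 a ainv x y i + 2 * sig0 σ x y * y i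
          - (alpha a x y) ^ 2 * sigup ainv σ x i) ∧
      r00 (abar σ a) abarInv (bbar σ b) x y
        = Real.exp (σ x) * (r00 a ainv b x y
            + rho ainv b σ x * (alpha a x y) ^ 2 - sig0 σ x y * beta b x y) ∧
      (∀ i, sup0 (abar σ a) abarInv (bbar σ b) x y i
        = Real.exp (-σ x) * (sup0 a ainv b x y i
            + (sig0 σ x y * bup ainv b x i - beta b x y * sigup ainv σ x i) / 2)) ∧
      s0 (abar σ a) abarInv (bbar σ b) x y
        = s0 a ainv b x y
          + (sig0 σ x y * bsq ainv b x - rho ainv b σ x * beta b x y) / 2 := by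
  intro y
  have hmem := hM.mem_nhds hx
  have hσd : DifferentiableAt ℝ σ x := (hσ.contDiffAt hmem).differentiableAt (by simp)
  have had : ∀ i j : Fin n, DifferentiableAt ℝ (fun z => a z i j) x := fun i j =>
    ((ha i j).contDiffAt hmem).differentiableAt (by simp)
  have hbd : ∀ i : Fin n, DifferentiableAt ℝ (fun z => b z i) x := fun i =>
    ((hb i).contDiffAt hmem).differentiableAt (by simp)
  have habarInv : abarInv x = Real.exp (-(2 * σ x)) • ainv x := by
    have h2 : abar σ a x * (Real.exp (-(2 * σ x)) • ainv x) = 1 := by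
      show (Real.exp (2 * σ x) • a x) * _ = 1
      rw [Matrix.smul_mul, Matrix.mul_smul, hInv x hx, smul_smul, ← Real.exp_add]
      norm_num
    exact Matrix.right_inv_eq_right_inv (hInvBar x hx) h2
  have hkey : ∀ i k : Fin n, ∑ r, ainv x i r * a x r k = if i = k then (1:ℝ) else 0 := by
    intro i k
    have h := congrArg (fun m : Matrix (Fin n) (Fin n) ℝ => m i k)
      (mul_eq_one_comm.mp (hInv x hx))
    simpa [Matrix.mul_apply, Matrix.one_apply] using h
  have hasym : ∀ i j : Fin n, a x i j = a x j i := by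
    intro i j
    conv_lhs => rw [← (hsym x hx).eq]
    exact Matrix.transpose_apply _ i j
  have hainvsym : ∀ r s : Fin n, ainv x r s = ainv x s r := by
    have h1 : ainv x = (a x)⁻¹ := (Matrix.inv_eq_right_inv (hInv x hx)).symm
    have h2 : ((a x)⁻¹).transpose = (a x)⁻¹ := by
      rw [Matrix.transpose_nonsing_inv, (hsym x hx).eq]
    intro r s
    calc ainv x r s = ((a x)⁻¹).transpose s r := by rw [h1]; rfl
      _ = ainv x s r := by rw [h2, h1]
  have hpda : ∀ r k j : Fin n, pd (fun z => abar σ a z r k) j x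
      = Real.exp (2 * σ x) * (2 * pd σ j x * a x r k + pd (fun z => a z r k) j x) := by
    intro r k j
    have heq : (fun z => abar σ a z r k) = fun z => Real.exp (2 * σ z) * a z r k := by
      funext z; simp [abar]
    rw [heq, pd_mul ((hσd.const_mul 2).exp) (had r k) j, pd_exp_mul hσd 2 j]
    ring
  have hpdb : ∀ i j : Fin n, pd (fun z => bbar σ b z i) j x
      = Real.exp (σ x) * (pd σ j x * b x i + pd (fun z => b z i) j x) := by
    intro i j
    have heq : (fun z => bbar σ b z i) = fun z => Real.exp (1 * σ z) * b z i := by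
      funext z; simp [bbar]
    rw [heq, pd_mul ((hσd.const_mul 1).exp) (hbd i) j, pd_exp_mul hσd 1 j]
    rw [show (1:ℝ) * σ x = σ x from one_mul _]
    ring
  have hchr : ∀ i j k : Fin n, chr (abar σ a) abarInv x i j k
      = chr a ainv x i j k + pd σ j x * (if i = k then 1 else 0)
        + pd σ k x * (if i = j then 1 else 0) - a x j k * sigup ainv σ x i := by
    intro i j k
    unfold chr sigup
    rw [habarInv]
    have hsummand : ∀ r : Fin n, (Real.exp (-(2 * σ x)) • ainv x) i r *
        (pd (fun z => abar σ a z r k) j x + pd (fun z => abar σ a z r j) k x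
          - pd (fun z => abar σ a z j k) r x)
      = ainv x i r * (pd (fun z => a z r k) j x + pd (fun z => a z r j) k x
          - pd (fun z => a z j k) r x)
        + 2 * pd σ j x * (ainv x i r * a x r k) + 2 * pd σ k x * (ainv x i r * a x r j)
        - 2 * (a x j k * (ainv x i r * pd σ r x)) := by
      intro r
      rw [hpda, hpda, hpda]
      simp only [Matrix.smul_apply, smul_eq_mul]
      rw [Real.exp_neg]
      field_simp
      ring
    rw [Finset.sum_congr rfl fun r _ => hsummand r]
    simp only [Finset.sum_add_distrib, Finset.sum_sub_distrib, ← Finset.mul_sum, hkey]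
    ring

  have dsum_congr : ∀ {f g : Fin n → Fin n → ℝ}, (∀ i j, f i j = g i j) →
      (∑ i, ∑ j, f i j) = ∑ i, ∑ j, g i j := fun h =>
    Finset.sum_congr rfl fun i _ => Finset.sum_congr rfl fun j _ => h i j
  have hQ : (alpha a x y) ^ 2 = ∑ i, ∑ j, a x i j * y i * y j := by
    have h0 : dotProduct y ((a x).mulVec y) = ∑ i, ∑ j, a x i j * y i * y j := by
      simp only [dotProduct, Matrix.mulVec, Finset.mul_sum]
      exact Finset.sum_congr rfl fun i _ => Finset.sum_congr rfl fun j _ => by ring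
    unfold alpha
    rw [Real.sq_sqrt (by rw [← h0]; exact (hpos x hx).posSemidef.dotProduct_mulVec_nonneg y)]
  have hrho' : ∑ r, b x r * sigup ainv σ x r = rho ainv b σ x := by
    unfold sigup rho bup
    simp only [Finset.mul_sum]
    rw [Finset.sum_comm]
    exact Finset.sum_congr rfl fun r _ => Finset.sum_congr rfl fun s _ => by
      rw [hainvsym s r]; ring
  have hbb : ∑ r, b x r * bup ainv b x r = bsq ainv b x := by
    unfold bup bsq
    simp only [Finset.mul_sum]
    exact Finset.sum_congr rfl fun r _ => Finset.sum_congr rfl fun s _ => by ring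
  have hEE : Real.exp (-(2 * σ x)) * Real.exp (σ x) = Real.exp (-σ x) := by
    rw [← Real.exp_add]; ring_nf
  have hE1 : Real.exp (σ x) * Real.exp (-σ x) = 1 := by
    rw [← Real.exp_add]; simp
  -- γ̄^i_{00}
  have hgam : ∀ i, gam00 (abar σ a) abarInv x y i
      = gam00 a ainv x y i + 2 * sig0 σ x y * y i
        - (alpha a x y) ^ 2 * sigup ainv σ x i := by
    intro i
    unfold gam00
    have expand : ∀ j k, chr (abar σ a) abarInv x i j k * y j * y k
        = chr a ainv x i j k * y j * y k
          + pd σ j x * ((if i = k then (1:ℝ) else 0) * (y j * y k))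
          + pd σ k x * ((if i = j then (1:ℝ) else 0) * (y j * y k))
          - a x j k * sigup ainv σ x i * y j * y k := fun j k => by rw [hchr]; ring
    rw [dsum_congr expand]
    simp only [Finset.sum_add_distrib, Finset.sum_sub_distrib]
    have e1 : ∑ j, ∑ k, pd σ j x * ((if i = k then (1:ℝ) else 0) * (y j * y k))
        = sig0 σ x y * y i := by
      have h1 : ∀ j, ∑ k, pd σ j x * ((if i = k then (1:ℝ) else 0) * (y j * y k))
          = pd σ j x * y j * y i := by
        intro j
        rw [Finset.sum_eq_single i]
        · simp; ring
        · intro k _ hk; simp [Ne.symm hk]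
        · simp
      rw [Finset.sum_congr rfl fun j _ => h1 j]
      unfold sig0
      rw [Finset.sum_mul]
    have e2 : ∑ j, ∑ k, pd σ k x * ((if i = j then (1:ℝ) else 0) * (y j * y k))
        = sig0 σ x y * y i := by
      rw [Finset.sum_eq_single i]
      · unfold sig0
        rw [Finset.sum_mul]
        exact Finset.sum_congr rfl fun k _ => by simp; ring
      · intro j _ hj
        refine Finset.sum_eq_zero fun k _ => by simp [Ne.symm hj]
      · simp
    have e3 : ∑ j, ∑ k, a x j k * sigup ainv σ x i * y j * y k
        = (alpha a x y) ^ 2 * sigup ainv σ x i := by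
      rw [hQ]
      simp only [Finset.sum_mul]
      exact dsum_congr fun j k => by ring
    rw [e1, e2, e3]
    ring
  -- covariant derivative
  have hcovd : ∀ i j, covd (abar σ a) abarInv (bbar σ b) x i j
      = Real.exp (σ x) * (covd a ainv b x i j - pd σ i x * b x j
          + rho ainv b σ x * a x i j) := by
    intro i j
    unfold covd
    rw [hpdb i j]
    have expand : ∀ r : Fin n, bbar σ b x r * chr (abar σ a) abarInv x r i j
        = Real.exp (σ x) * (b x r * chr a ainv x r i j)
          + Real.exp (σ x) * (pd σ i x * ((if r = j then (1:ℝ) else 0) * b x r))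
          + Real.exp (σ x) * (pd σ j x * ((if r = i then (1:ℝ) else 0) * b x r))
          - Real.exp (σ x) * (a x i j * (b x r * sigup ainv σ x r)) := by
      intro r
      rw [hchr]
      show Real.exp (σ x) * b x r * _ = _
      ring
    rw [Finset.sum_congr rfl fun r _ => expand r]
    simp only [Finset.sum_add_distrib, Finset.sum_sub_distrib]
    have f1 : ∑ r, Real.exp (σ x) * (b x r * chr a ainv x r i j)
        = Real.exp (σ x) * ∑ r, b x r * chr a ainv x r i j := by
      rw [Finset.mul_sum]
    have f2 : ∑ r, Real.exp (σ x) * (pd σ i x * ((if r = j then (1:ℝ) else 0) * b x r))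
        = Real.exp (σ x) * (pd σ i x * b x j) := by
      rw [Finset.sum_eq_single j]
      · simp
      · intro r _ hr; simp [hr]
      · simp
    have f3 : ∑ r, Real.exp (σ x) * (pd σ j x * ((if r = i then (1:ℝ) else 0) * b x r))
        = Real.exp (σ x) * (pd σ j x * b x i) := by
      rw [Finset.sum_eq_single i]
      · simp
      · intro r _ hr; simp [hr]
      · simp
    have f4 : ∑ r, Real.exp (σ x) * (a x i j * (b x r * sigup ainv σ x r))
        = Real.exp (σ x) * (a x i j * rho ainv b σ x) := by
      simp only [← Finset.mul_sum, hrho']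
    rw [f1, f2, f3, f4]
    ring
  -- r̄_{ij}, s̄_{ij}
  have hrlow : ∀ i j, rlow (abar σ a) abarInv (bbar σ b) x i j
      = Real.exp (σ x) * (rlow a ainv b x i j
          - (pd σ i x * b x j + pd σ j x * b x i) / 2 + rho ainv b σ x * a x i j) := by
    intro i j
    unfold rlow
    rw [hcovd i j, hcovd j i, hasym j i]
    ring
  have hslow : ∀ i j, slow (abar σ a) abarInv (bbar σ b) x i j
      = Real.exp (σ x) * (slow a ainv b x i j
          - (pd σ i x * b x j - pd σ j x * b x i) / 2) := by
    intro i j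
    unfold slow
    rw [hcovd i j, hcovd j i, hasym j i]
    ring
  -- r̄_{00}
  have hr00 : r00 (abar σ a) abarInv (bbar σ b) x y
      = Real.exp (σ x) * (r00 a ainv b x y
          + rho ainv b σ x * (alpha a x y) ^ 2 - sig0 σ x y * beta b x y) := by
    unfold r00
    have expand : ∀ i j, rlow (abar σ a) abarInv (bbar σ b) x i j * y i * y j
        = Real.exp (σ x) * (rlow a ainv b x i j * y i * y j)
          - Real.exp (σ x) * (pd σ i x * y i * (b x j * y j)) / 2
          - Real.exp (σ x) * (b x i * y i * (pd σ j x * y j)) / 2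
          + Real.exp (σ x) * (rho ainv b σ x * (a x i j * y i * y j)) :=
      fun i j => by rw [hrlow i j]; ring
    rw [dsum_congr expand]
    simp only [Finset.sum_add_distrib, Finset.sum_sub_distrib]
    have f1 : ∑ i, ∑ j, Real.exp (σ x) * (rlow a ainv b x i j * y i * y j)
        = Real.exp (σ x) * r00 a ainv b x y := by
      unfold r00
      simp only [Finset.mul_sum]
    have f2 : ∑ i, ∑ j, Real.exp (σ x) * (pd σ i x * y i * (b x j * y j)) / 2
        = Real.exp (σ x) * (sig0 σ x y * beta b x y) / 2 := by
      unfold sig0 beta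
      rw [Finset.sum_mul_sum]
      simp only [Finset.mul_sum, Finset.sum_div]
    have f3 : ∑ i, ∑ j, Real.exp (σ x) * (b x i * y i * (pd σ j x * y j)) / 2
        = Real.exp (σ x) * (sig0 σ x y * beta b x y) / 2 := by
      unfold sig0 beta
      rw [mul_comm (∑ j, pd σ j x * y j) (∑ i, b x i * y i), Finset.sum_mul_sum]
      simp only [Finset.mul_sum, Finset.sum_div]
    have f4 : ∑ i, ∑ j, Real.exp (σ x) * (rho ainv b σ x * (a x i j * y i * y j))
        = Real.exp (σ x) * (rho ainv b σ x * (alpha a x y) ^ 2) := by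
      rw [hQ]
      simp only [Finset.mul_sum]
    rw [f1, f2, f3, f4]
    unfold r00
    ring
  -- s̄^i_j
  have hsup : ∀ i j, sup (abar σ a) abarInv (bbar σ b) x i j
      = Real.exp (-σ x) * (sup a ainv b x i j
          - (sigup ainv σ x i * b x j - pd σ j x * bup ainv b x i) / 2) := by
    intro i j
    unfold sup
    rw [habarInv]
    have expand : ∀ r : Fin n, (Real.exp (-(2 * σ x)) • ainv x) i r
        * slow (abar σ a) abarInv (bbar σ b) x r j
      = Real.exp (-σ x) * (ainv x i r * slow a ainv b x r j)
        - Real.exp (-σ x) * (b x j * (ainv x i r * pd σ r x)) / 2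
        + Real.exp (-σ x) * (pd σ j x * (ainv x i r * b x r)) / 2 := by
      intro r
      rw [hslow r j]
      simp only [Matrix.smul_apply, smul_eq_mul]
      rw [← hEE]
      ring
    rw [Finset.sum_congr rfl fun r _ => expand r]
    simp only [Finset.sum_add_distrib, Finset.sum_sub_distrib]
    have f1 : ∑ r, Real.exp (-σ x) * (ainv x i r * slow a ainv b x r j)
        = Real.exp (-σ x) * sup a ainv b x i j := by
      unfold sup
      rw [Finset.mul_sum]
    have f2 : ∑ r, Real.exp (-σ x) * (b x j * (ainv x i r * pd σ r x)) / 2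
        = Real.exp (-σ x) * (b x j * sigup ainv σ x i) / 2 := by
      unfold sigup
      simp only [Finset.mul_sum, Finset.sum_div]
    have f3 : ∑ r, Real.exp (-σ x) * (pd σ j x * (ainv x i r * b x r)) / 2
        = Real.exp (-σ x) * (pd σ j x * bup ainv b x i) / 2 := by
      unfold bup
      simp only [Finset.mul_sum, Finset.sum_div]
    rw [f1, f2, f3]
    unfold sup
    ring
  -- s̄^i_0
  have hsup0 : ∀ i, sup0 (abar σ a) abarInv (bbar σ b) x y i
      = Real.exp (-σ x) * (sup0 a ainv b x y i
          + (sig0 σ x y * bup ainv b x i - beta b x y * sigup ainv σ x i) / 2) := by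
    intro i
    unfold sup0
    have expand : ∀ j, sup (abar σ a) abarInv (bbar σ b) x i j * y j
        = Real.exp (-σ x) * (sup a ainv b x i j * y j)
          - Real.exp (-σ x) * (sigup ainv σ x i * (b x j * y j)) / 2
          + Real.exp (-σ x) * (bup ainv b x i * (pd σ j x * y j)) / 2 :=
      fun j => by rw [hsup i j]; ring
    rw [Finset.sum_congr rfl fun j _ => expand j]
    simp only [Finset.sum_add_distrib, Finset.sum_sub_distrib]
    have f1 : ∑ j, Real.exp (-σ x) * (sup a ainv b x i j * y j)
        = Real.exp (-σ x) * sup0 a ainv b x y i := by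
      unfold sup0
      rw [Finset.mul_sum]
    have f2 : ∑ j, Real.exp (-σ x) * (sigup ainv σ x i * (b x j * y j)) / 2
        = Real.exp (-σ x) * (sigup ainv σ x i * beta b x y) / 2 := by
      unfold beta
      simp only [Finset.mul_sum, Finset.sum_div]
    have f3 : ∑ j, Real.exp (-σ x) * (bup ainv b x i * (pd σ j x * y j)) / 2
        = Real.exp (-σ x) * (bup ainv b x i * sig0 σ x y) / 2 := by
      unfold sig0
      simp only [Finset.mul_sum, Finset.sum_div]
    rw [f1, f2, f3]
    unfold sup0
    ring
  -- s̄_j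
  have hsvec : ∀ j, svec (abar σ a) abarInv (bbar σ b) x j
      = svec a ainv b x j
        - (rho ainv b σ x * b x j - pd σ j x * bsq ainv b x) / 2 := by
    intro j
    unfold svec
    have expand : ∀ r : Fin n, bbar σ b x r * sup (abar σ a) abarInv (bbar σ b) x r j
        = b x r * sup a ainv b x r j
          - b x j * (b x r * sigup ainv σ x r) / 2
          + pd σ j x * (b x r * bup ainv b x r) / 2 := by
      intro r
      rw [hsup r j]
      show Real.exp (σ x) * b x r * _ = _
      linear_combination (b x r * (sup a ainv b x r j
        - (sigup ainv σ x r * b x j - pd σ j x * bup ainv b x r) / 2)) * hE1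
    rw [Finset.sum_congr rfl fun r _ => expand r]
    simp only [Finset.sum_add_distrib, Finset.sum_sub_distrib]
    have f2 : ∑ r, b x j * (b x r * sigup ainv σ x r) / 2
        = b x j * rho ainv b σ x / 2 := by
      simp only [← Finset.sum_div, ← Finset.mul_sum, hrho']
    have f3 : ∑ r, pd σ j x * (b x r * bup ainv b x r) / 2
        = pd σ j x * bsq ainv b x / 2 := by
      simp only [← Finset.sum_div, ← Finset.mul_sum, hbb]
    rw [f2, f3]
    ring
  -- s̄_0
  have hs0 : s0 (abar σ a) abarInv (bbar σ b) x y
      = s0 a ainv b x y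
        + (sig0 σ x y * bsq ainv b x - rho ainv b σ x * beta b x y) / 2 := by
    unfold s0
    have expand : ∀ j, svec (abar σ a) abarInv (bbar σ b) x j * y j
        = svec a ainv b x j * y j
          - rho ainv b σ x * (b x j * y j) / 2
          + bsq ainv b x * (pd σ j x * y j) / 2 :=
      fun j => by rw [hsvec j]; ring
    rw [Finset.sum_congr rfl fun j _ => expand j]
    simp only [Finset.sum_add_distrib, Finset.sum_sub_distrib]
    have f2 : ∑ j, rho ainv b σ x * (b x j * y j) / 2
        = rho ainv b σ x * beta b x y / 2 := by
      unfold beta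
      simp only [← Finset.sum_div, ← Finset.mul_sum]
    have f3 : ∑ j, bsq ainv b x * (pd σ j x * y j) / 2
        = bsq ainv b x * sig0 σ x y / 2 := by
      unfold sig0
      simp only [← Finset.sum_div, ← Finset.mul_sum]
    rw [f2, f3]
    ring
  exact ⟨hgam, hr00, hsup0, hs0⟩

end CD
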